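/- Let (J, R, σ) be a generalized complex structure on g and let B : g → g* be a linear skew-symmetric map (B(u)(v) = -B(v)(u) for all u, v) which is a 2-cocycle, i.e. B([u,v])(w) + B([v,w])(u) + B([w,u])(v) = 0 for all u, v, w in g. Then the triple (J - R∘B, R, B∘J + σ - B∘R∘B + J*∘B) is a generalized complex structure on g. -/
import Mathlib


open Module LinearMap

variable {g : Type*} [LieRing g] [LieAlgebra ℝ g]

/-- The coadjoint action: `(coad u α) v = -α ⁅u, v⁆`. -/
noncomputable def coad (u : g) (α : Module.Dual ℝ g) : Module.Dual ℝ g :=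
  -(α ∘ₗ (LieAlgebra.ad ℝ g u : g →ₗ[ℝ] g))

/-- The bracket `⁅u + α, v + β⁆▷ = ⁅u, v⁆ + ad*_u β - ad*_v α` on `g ⊕ g*`. -/
noncomputable def dbracket (a b : g × Module.Dual ℝ g) : g × Module.Dual ℝ g :=
  (⁅a.1, b.1⁆, coad a.1 b.2 - coad b.1 a.2)

/-- The neutral pairing `⟨u + α, v + β⟩ = (α v + β u)/2` on `g ⊕ g*`. -/
noncomputable def pairing (a b : g × Module.Dual ℝ g) : ℝ :=
  (a.2 b.1 + b.2 a.1) / 2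

/-- `dτ(u,v,w) = -τ(⁅u,v⁆,w) + τ(⁅u,w⁆,v) - τ(⁅v,w⁆,u)`. -/
noncomputable def dForm (τ : g → g → ℝ) (u v w : g) : ℝ :=
  -τ ⁅u, v⁆ w + τ ⁅u, w⁆ v - τ ⁅v, w⁆ u

/-- The linear functional `w ↦ dσ^b(u,v,w)`. -/
noncomputable def dSigma (σ : g →ₗ[ℝ] Module.Dual ℝ g) (u v : g) : Module.Dual ℝ g :=
  -σ ⁅u, v⁆ + (σ.flip v) ∘ₗ (LieAlgebra.ad ℝ g u : g →ₗ[ℝ] g)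
    - (σ.flip u) ∘ₗ (LieAlgebra.ad ℝ g v : g →ₗ[ℝ] g)

/-- A generalized complex structure on a Lie algebra `g`. -/
structure IsGCS (J : g →ₗ[ℝ] g) (R : Module.Dual ℝ g →ₗ[ℝ] g)
    (σ : g →ₗ[ℝ] Module.Dual ℝ g) : Prop where
  skewR : ∀ α β : Module.Dual ℝ g, α (R β) = -β (R α)
  skewσ : ∀ u v : g, σ u v = -σ v u
  c0a : J ∘ₗ J + R ∘ₗ σ = -LinearMap.id
  c0b : J ∘ₗ R = R ∘ₗ J.dualMap
  c0c : σ ∘ₗ J = J.dualMap ∘ₗ σ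
  c1 : ∀ α β γ : Module.Dual ℝ g, α ⁅R β, R γ⁆ + β ⁅R γ, R α⁆ + γ ⁅R α, R β⁆ = 0
  c2 : ∀ α β : Module.Dual ℝ g,
    J.dualMap (coad (R α) β - coad (R β) α)
      = coad (R α) (J.dualMap β) - coad (R β) (J.dualMap α)
  c3 : ∀ u v : g, ⁅J u, J v⁆ - J ⁅J u, v⁆ - J ⁅u, J v⁆ + J (J ⁅u, v⁆) = R (dSigma σ u v)
  c4 : ∀ u v w : g, dForm (fun a b => σ (J a) b) u v w =
    dForm (fun a b => σ a b) (J u) v w + dForm (fun a b => σ a b) u (J v) w +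
      dForm (fun a b => σ a b) u v (J w)

/-- The endomorphism of `g ⊕ g*` associated to a triple `(J, R, σ)`. -/
noncomputable def Kmap (J : g →ₗ[ℝ] g) (R : Module.Dual ℝ g →ₗ[ℝ] g)
    (σ : g →ₗ[ℝ] Module.Dual ℝ g) (a : g × Module.Dual ℝ g) : g × Module.Dual ℝ g :=
  (J a.1 + R a.2, σ a.1 - J.dualMap a.2)

/-- A generalized Kähler structure on a Lie algebra `g`. -/
structure IsGK (J₁ : g →ₗ[ℝ] g) (R₁ : Module.Dual ℝ g →ₗ[ℝ] g)
    (σ₁ : g →ₗ[ℝ] Module.Dual ℝ g) (J₂ : g →ₗ[ℝ] g) (R₂ : Module.Dual ℝ g →ₗ[ℝ] g)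
    (σ₂ : g →ₗ[ℝ] Module.Dual ℝ g) : Prop where
  gcs₁ : IsGCS J₁ R₁ σ₁
  gcs₂ : IsGCS J₂ R₂ σ₂
  comm : ∀ x : g × Module.Dual ℝ g,
    Kmap J₁ R₁ σ₁ (Kmap J₂ R₂ σ₂ x) = Kmap J₂ R₂ σ₂ (Kmap J₁ R₁ σ₁ x)
  symm : ∀ x y : g × Module.Dual ℝ g,
    pairing (Kmap J₁ R₁ σ₁ (Kmap J₂ R₂ σ₂ x)) y = pairing (Kmap J₁ R₁ σ₁ (Kmap J₂ R₂ σ₂ y)) x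
  posdef : ∀ x : g × Module.Dual ℝ g, x ≠ 0 → 0 < pairing (Kmap J₁ R₁ σ₁ (Kmap J₂ R₂ σ₂ x)) x


/- ===== auxiliary material for the proof ===== -/

lemma dual_ext' {x y : g} (h : ∀ γ : Module.Dual ℝ g, γ x = γ y) : x = y := by
  have h2 : ∀ γ : Module.Dual ℝ g, γ (x - y) = 0 := fun γ => by simp [h γ]
  exact sub_eq_zero.mp ((Module.forall_dual_apply_eq_zero_iff ℝ (x - y)).mp h2)

lemma coad_apply (u : g) (α : Module.Dual ℝ g) (w : g) : coad u α w = -α ⁅u, w⁆ := by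
  simp [coad, LieAlgebra.ad_apply]

lemma dSigma_apply (σ : g →ₗ[ℝ] Module.Dual ℝ g) (u v w : g) :
    dSigma σ u v w = -σ ⁅u, v⁆ w + σ ⁅u, w⁆ v - σ ⁅v, w⁆ u := by
  simp [dSigma, LieAlgebra.ad_apply]

lemma flipd (δ : Module.Dual ℝ g) (a b : g) : δ ⁅a, b⁆ = -δ ⁅b, a⁆ := by
  rw [← map_neg, lie_skew]

lemma flipJd (δ : Module.Dual ℝ g) (J : g →ₗ[ℝ] g) (a b : g) :
    δ (J ⁅a, b⁆) = -δ (J ⁅b, a⁆) := by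
  rw [← map_neg, ← map_neg, lie_skew]

lemma flipm (T : g →ₗ[ℝ] Module.Dual ℝ g) (a b : g) (c : g) :
    T ⁅a, b⁆ c = -T ⁅b, a⁆ c := by
  rw [← LinearMap.neg_apply, ← map_neg, lie_skew]

lemma coad_add_left (u v : g) (α : Module.Dual ℝ g) :
    coad (u + v) α = coad u α + coad v α := by
  ext w; simp [coad_apply, add_lie]; ring

lemma coad_sub_right (u : g) (α β : Module.Dual ℝ g) :
    coad u (α - β) = coad u α - coad u β := by
  ext w; simp [coad_apply]; ring

lemma coad_zero_left (α : Module.Dual ℝ g) : coad (0 : g) α = 0 := by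
  ext w; simp [coad_apply]

lemma coad_zero_right (u : g) : coad u (0 : Module.Dual ℝ g) = 0 := by
  ext w; simp [coad_apply]

/-- The Nijenhuis-type tensor of an endomorphism of `g ⊕ g*`. -/
noncomputable def NK (K : g × Module.Dual ℝ g → g × Module.Dual ℝ g)
    (x y : g × Module.Dual ℝ g) : g × Module.Dual ℝ g :=
  dbracket (K x) (K y) - K (dbracket (K x) y) - K (dbracket x (K y)) + K (K (dbracket x y))

lemma NK_eq_zero {J : g →ₗ[ℝ] g} {R : Module.Dual ℝ g →ₗ[ℝ] g}
    {σ : g →ₗ[ℝ] Module.Dual ℝ g} (h : IsGCS J R σ) (x y : g × Module.Dual ℝ g) :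
    NK (Kmap J R σ) x y = 0 := by
  obtain ⟨skewR, skewσ, c0a, c0b, c0c, c1, c2, c3, c4d⟩ := h
  have c4 : ∀ u v w : g, -σ (J ⁅u, v⁆) w + σ (J ⁅u, w⁆) v - σ (J ⁅v, w⁆) u =
      (-σ ⁅J u, v⁆ w + σ ⁅J u, w⁆ v - σ ⁅v, w⁆ (J u)) +
      (-σ ⁅u, J v⁆ w + σ ⁅u, w⁆ (J v) - σ ⁅J v, w⁆ u) +
      (-σ ⁅u, v⁆ (J w) + σ ⁅u, J w⁆ v - σ ⁅v, J w⁆ u) := by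
    intro u v w
    have := c4d u v w
    simpa [dForm] using this
  have hJR : ∀ δ : Module.Dual ℝ g, J (R δ) = R (J.dualMap δ) :=
    fun δ => LinearMap.congr_fun c0b δ
  have hc2 : ∀ (a b : Module.Dual ℝ g) (w : g),
      -b ⁅R a, J w⁆ + a ⁅R b, J w⁆ = -b (J ⁅R a, w⁆) + a (J ⁅R b, w⁆) := by
    intro a b w
    have := LinearMap.congr_fun (c2 a b) w
    simpa [coad_apply] using this
  have hJJ : ∀ x : g, J (J x) = -x - R (σ x) := by
    intro x
    have := LinearMap.congr_fun c0a x
    simp only [LinearMap.add_apply, LinearMap.comp_apply, LinearMap.neg_apply,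
      LinearMap.id_apply] at this
    exact eq_sub_of_add_eq this
  have hc3g : ∀ (γ : Module.Dual ℝ g) (a b : g),
      γ ⁅J a, J b⁆ - γ (J ⁅J a, b⁆) - γ (J ⁅a, J b⁆) + γ (J (J ⁅a, b⁆))
        = σ ⁅a, b⁆ (R γ) - σ ⁅a, R γ⁆ b + σ ⁅b, R γ⁆ a := by
    intro γ a b
    have h1 := congrArg (⇑γ) (c3 a b)
    simp only [map_sub, map_add, skewR γ, dSigma_apply] at h1
    linarith [h1]
  have hc0c : ∀ a b : g, σ (J a) b = σ a (J b) := by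
    intro a b
    have := LinearMap.congr_fun (LinearMap.congr_fun c0c a) b
    simpa using this
  have hlieJJ : ∀ (δ : Module.Dual ℝ g) (a x : g),
      δ ⁅a, J (J x)⁆ = -δ ⁅a, x⁆ - δ ⁅a, R (σ x)⁆ := by
    intro δ a x
    rw [hJJ x]
    simp only [lie_sub, lie_neg, map_sub, map_neg]
  have hJJd : ∀ (δ : Module.Dual ℝ g) (x : g),
      δ (J (J x)) = -δ x + σ x (R δ) := by
    intro δ x
    rw [hJJ x]
    simp only [map_sub, map_neg]
    rw [skewR δ (σ x)]
    ring
  have hσR : ∀ (δ : Module.Dual ℝ g) (x : g), σ (R δ) x = δ (R (σ x)) := by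
    intro δ x
    rw [skewσ (R δ) x, skewR (σ x) δ]
    ring
  obtain ⟨u, α⟩ := x
  obtain ⟨v, β⟩ := y
  rw [Prod.ext_iff]
  constructor
  · apply dual_ext'
    intro γ
    have hRapp : ∀ δ : Module.Dual ℝ g, γ (R δ) = -δ (R γ) := fun δ => skewR γ δ
    have hc3 : ∀ a b : g, γ ⁅J a, J b⁆ - γ (J ⁅J a, b⁆) - γ (J ⁅a, J b⁆) + γ (J (J ⁅a, b⁆))
        = σ ⁅a, b⁆ (R γ) - σ ⁅a, R γ⁆ b + σ ⁅b, R γ⁆ a := fun a b => hc3g γ a b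
    simp only [NK, Kmap, dbracket, Prod.fst_add, Prod.fst_sub, Prod.snd_add, Prod.snd_sub,
      Prod.fst_zero, coad_add_left, coad_sub_right,
      map_add, map_sub, map_neg, lie_add, add_lie, lie_sub, sub_lie, hJR, hRapp,
      coad_apply, LinearMap.dualMap_apply, map_zero]
    linarith [hc3 u v, c1 α β γ, flipd β (R γ) (R α), skewσ ⁅u, R γ⁆ v, skewσ ⁅v, R γ⁆ u,
      hc2 β γ u, hc2 α γ v, flipd γ (R β) (J u), flipJd γ J (R β) u, flipd β (R γ) (J u),
      flipJd β J (R γ) u, flipd α (R γ) (J v), flipJd α J (R γ) v]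
  · apply LinearMap.ext
    intro w
    simp only [NK, Kmap, dbracket, Prod.fst_add, Prod.fst_sub, Prod.snd_add, Prod.snd_sub,
      Prod.snd_zero, Prod.fst_zero, coad_add_left, coad_sub_right,
      map_add, map_sub, map_neg, lie_add, add_lie, lie_sub, sub_lie,
      coad_apply, LinearMap.dualMap_apply, map_zero, LinearMap.sub_apply, LinearMap.add_apply,
      LinearMap.neg_apply, LinearMap.zero_apply]
    have e1 : (σ (R (coad u β))) w = -β ⁅u, R (σ w)⁆ := by
      rw [hσR]; simp [coad_apply]
    have e2 : (σ (R (coad v α))) w = -α ⁅v, R (σ w)⁆ := by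
      rw [hσR]; simp [coad_apply]
    linarith [e1, e2, hc2 α β w, c4 u v w,
      hc3g β u w, hc3g α v w,
      hJJd β ⁅u, w⁆, hJJd α ⁅v, w⁆,
      hlieJJ β u w, hlieJJ α v w,
      hc0c ⁅u, w⁆ v, hc0c ⁅v, w⁆ u, hc0c ⁅u, v⁆ w,
      skewσ v ⁅J u, w⁆, skewσ u ⁅J v, w⁆, skewσ u ⁅v, J w⁆, skewσ v ⁅u, J w⁆,
      skewσ ⁅w, R β⁆ u, skewσ ⁅w, R α⁆ v,
      flipd (σ u) w (R β), flipd (σ v) w (R α),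
      skewσ ⁅u, R β⁆ w, skewσ ⁅v, R α⁆ w, skewσ ⁅u, v⁆ (J w), skewσ ⁅u, w⁆ (R β), skewσ ⁅v, w⁆ (R α),
      flipm σ (R α) v w, flipm σ (R β) u w]

lemma isGCS_mk (J : g →ₗ[ℝ] g) (R : Module.Dual ℝ g →ₗ[ℝ] g)
    (σ : g →ₗ[ℝ] Module.Dual ℝ g)
    (skewR : ∀ α β : Module.Dual ℝ g, α (R β) = -β (R α))
    (skewσ : ∀ u v : g, σ u v = -σ v u)
    (hK2 : ∀ x : g × Module.Dual ℝ g, Kmap J R σ (Kmap J R σ x) = -x)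
    (hN : ∀ x y : g × Module.Dual ℝ g, NK (Kmap J R σ) x y = 0) :
    IsGCS J R σ := by
  have c0a : J ∘ₗ J + R ∘ₗ σ = -LinearMap.id := by
    apply LinearMap.ext
    intro u
    have h1 := congrArg Prod.fst (hK2 (u, 0))
    simp only [Kmap, map_zero, add_zero, sub_zero, Prod.fst_neg, Prod.snd_neg,
      Prod.fst_zero, Prod.snd_zero, neg_zero] at h1
    simp only [LinearMap.add_apply, LinearMap.comp_apply, LinearMap.neg_apply,
      LinearMap.id_apply]
    exact h1
  have c0c : σ ∘ₗ J = J.dualMap ∘ₗ σ := by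
    apply LinearMap.ext
    intro u
    have h1 := congrArg Prod.snd (hK2 (u, 0))
    simp only [Kmap, map_zero, add_zero, sub_zero, Prod.fst_neg, Prod.snd_neg,
      Prod.fst_zero, Prod.snd_zero, neg_zero] at h1
    simp only [LinearMap.comp_apply]
    exact sub_eq_zero.mp h1
  have c0b : J ∘ₗ R = R ∘ₗ J.dualMap := by
    apply LinearMap.ext
    intro α
    have h1 := congrArg Prod.fst (hK2 (0, α))
    simp only [Kmap, map_zero, add_zero, sub_zero, zero_add, zero_sub, map_neg,
      ← sub_eq_add_neg, Prod.fst_neg, Prod.snd_neg, Prod.fst_zero, Prod.snd_zero,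
      neg_zero] at h1
    simp only [LinearMap.comp_apply]
    exact sub_eq_zero.mp h1
  have hc0c : ∀ a b : g, σ (J a) b = σ a (J b) := by
    intro a b
    have := LinearMap.congr_fun (LinearMap.congr_fun c0c a) b
    simpa using this
  refine ⟨skewR, skewσ, c0a, c0b, c0c, ?_, ?_, ?_, ?_⟩
  · -- c1
    intro α β γ
    have h1 := congrArg (⇑γ) (congrArg Prod.fst (hN (0, α) (0, β)))
    simp only [NK, Kmap, dbracket, Prod.fst_add, Prod.fst_sub, Prod.snd_add, Prod.snd_sub,
      Prod.fst_zero, Prod.snd_zero, coad_add_left, coad_sub_right, coad_zero_left,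
      coad_zero_right, map_add, map_sub, map_neg, lie_add, add_lie, lie_sub, sub_lie,
      lie_zero, zero_lie, skewR γ, coad_apply, LinearMap.dualMap_apply, map_zero,
      add_zero, zero_add, sub_zero, zero_sub, neg_neg, neg_zero] at h1
    linarith [h1, flipd β (R γ) (R α)]
  · -- c2
    intro α β
    apply LinearMap.ext
    intro w
    have h2 := LinearMap.congr_fun (congrArg Prod.snd (hN (0, α) (0, β))) w
    simp only [NK, Kmap, dbracket, Prod.fst_add, Prod.fst_sub, Prod.snd_add, Prod.snd_sub,
      Prod.fst_zero, Prod.snd_zero, coad_add_left, coad_sub_right, coad_zero_left,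
      coad_zero_right, map_add, map_sub, map_neg, lie_add, add_lie, lie_sub, sub_lie,
      lie_zero, zero_lie, coad_apply, LinearMap.dualMap_apply, map_zero,
      LinearMap.sub_apply, LinearMap.add_apply, LinearMap.neg_apply, LinearMap.zero_apply,
      add_zero, zero_add, sub_zero, zero_sub, neg_neg, neg_zero] at h2
    simp only [map_sub, LinearMap.sub_apply, coad_apply, LinearMap.dualMap_apply]
    linarith [h2]
  · -- c3
    intro u v
    apply dual_ext'
    intro γ
    have h3 := congrArg (⇑γ) (congrArg Prod.fst (hN (u, 0) (v, 0)))
    simp only [NK, Kmap, dbracket, Prod.fst_add, Prod.fst_sub, Prod.snd_add, Prod.snd_sub,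
      Prod.fst_zero, Prod.snd_zero, coad_add_left, coad_sub_right, coad_zero_left,
      coad_zero_right, map_add, map_sub, map_neg, lie_add, add_lie, lie_sub, sub_lie,
      lie_zero, zero_lie, skewR γ, coad_apply, LinearMap.dualMap_apply, map_zero,
      add_zero, zero_add, sub_zero, zero_sub, neg_neg, neg_zero] at h3
    simp only [map_add, map_sub, skewR γ, dSigma_apply]
    linarith [h3, skewσ ⁅u, R γ⁆ v, skewσ ⁅v, R γ⁆ u]
  · -- c4
    intro u v w
    have h4 := LinearMap.congr_fun (congrArg Prod.snd (hN (u, 0) (v, 0))) w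
    simp only [NK, Kmap, dbracket, Prod.fst_add, Prod.fst_sub, Prod.snd_add, Prod.snd_sub,
      Prod.fst_zero, Prod.snd_zero, coad_add_left, coad_sub_right, coad_zero_left,
      coad_zero_right, map_add, map_sub, map_neg, lie_add, add_lie, lie_sub, sub_lie,
      lie_zero, zero_lie, coad_apply, LinearMap.dualMap_apply, map_zero,
      LinearMap.sub_apply, LinearMap.add_apply, LinearMap.neg_apply, LinearMap.zero_apply,
      add_zero, zero_add, sub_zero, zero_sub, neg_neg, neg_zero] at h4
    simp only [dForm]
    linarith [h4, hc0c ⁅u, w⁆ v, hc0c ⁅v, w⁆ u, hc0c ⁅u, v⁆ w,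
      skewσ v ⁅J u, w⁆, skewσ u ⁅J v, w⁆, skewσ u ⁅v, J w⁆, skewσ v ⁅u, J w⁆]

/-- The B-field shear `u + α ↦ u + (α + B u)` of `g ⊕ g*`. -/
noncomputable def eB (B : g →ₗ[ℝ] Module.Dual ℝ g) (x : g × Module.Dual ℝ g) :
    g × Module.Dual ℝ g :=
  (x.1, x.2 + B x.1)

lemma eB_cancel (B : g →ₗ[ℝ] Module.Dual ℝ g) (x : g × Module.Dual ℝ g) :
    eB B (eB (-B) x) = x := by
  simp [eB]

lemma eB_cancel' (B : g →ₗ[ℝ] Module.Dual ℝ g) (x : g × Module.Dual ℝ g) :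
    eB (-B) (eB B x) = x := by
  simp [eB]

lemma eB_bracket (B : g →ₗ[ℝ] Module.Dual ℝ g)
    (hBskew : ∀ u v : g, B u v = -B v u)
    (hBcocycle : ∀ u v w : g, B ⁅u, v⁆ w + B ⁅v, w⁆ u + B ⁅w, u⁆ v = 0)
    (x y : g × Module.Dual ℝ g) :
    dbracket (eB B x) (eB B y) = eB B (dbracket x y) := by
  obtain ⟨u, α⟩ := x
  obtain ⟨v, β⟩ := y
  rw [Prod.ext_iff]
  refine ⟨rfl, ?_⟩
  apply LinearMap.ext
  intro w
  simp only [eB, dbracket, coad_add_left, coad_sub_right, coad_apply, map_add, map_sub,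
    LinearMap.sub_apply, LinearMap.add_apply, LinearMap.neg_apply]
  have hcoadB : coad u (B v) w - coad v (B u) w = B ⁅u, v⁆ w := by
    simp only [coad_apply]
    linarith [hBcocycle u v w, hBskew ⁅v, w⁆ u, flipm B w u v, hBskew ⁅u, w⁆ v]
  simp only [coad_apply] at hcoadB
  linarith [hcoadB]

lemma NK_conj (B : g →ₗ[ℝ] Module.Dual ℝ g)
    (hBskew : ∀ u v : g, B u v = -B v u)
    (hBcocycle : ∀ u v w : g, B ⁅u, v⁆ w + B ⁅v, w⁆ u + B ⁅w, u⁆ v = 0)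
    (K : g × Module.Dual ℝ g → g × Module.Dual ℝ g) (x y : g × Module.Dual ℝ g) :
    NK (fun z => eB B (K (eB (-B) z))) x y
      = eB B (NK K (eB (-B) x) (eB (-B) y)) := by
  rw [show x = eB B (eB (-B) x) from (eB_cancel B x).symm,
      show y = eB B (eB (-B) y) from (eB_cancel B y).symm]
  generalize eB (-B) x = a
  generalize eB (-B) y = b
  have hb : ∀ p q : g × Module.Dual ℝ g,
      dbracket (eB B p) (eB B q) = eB B (dbracket p q) := eB_bracket B hBskew hBcocycle
  have hcomb : ∀ p q r s : g × Module.Dual ℝ g,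
      eB B p - eB B q - eB B r + eB B s = eB B (p - q - r + s) := by
    intro p q r s
    rw [Prod.ext_iff]
    constructor
    · simp [eB]
    · simp [eB]
      abel
  simp only [NK, eB_cancel', hb]
  rw [hcomb]

lemma K2_of_GCS {J : g →ₗ[ℝ] g} {R : Module.Dual ℝ g →ₗ[ℝ] g}
    {σ : g →ₗ[ℝ] Module.Dual ℝ g} (h : IsGCS J R σ) (x : g × Module.Dual ℝ g) :
    Kmap J R σ (Kmap J R σ x) = -x := by
  have hJR : ∀ δ : Module.Dual ℝ g, J (R δ) = R (J.dualMap δ) :=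
    fun δ => LinearMap.congr_fun h.c0b δ
  have hJJ : ∀ u : g, J (J u) = -u - R (σ u) := by
    intro u
    have := LinearMap.congr_fun h.c0a u
    simp only [LinearMap.add_apply, LinearMap.comp_apply, LinearMap.neg_apply,
      LinearMap.id_apply] at this
    exact eq_sub_of_add_eq this
  have hc0c : ∀ a b : g, σ (J a) b = σ a (J b) := by
    intro a b
    have := LinearMap.congr_fun (LinearMap.congr_fun h.c0c a) b
    simpa using this
  obtain ⟨u, α⟩ := x
  rw [Prod.ext_iff]
  constructor
  · simp only [Kmap, Prod.fst_neg, map_add, map_sub, hJR, hJJ]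
    abel
  · apply LinearMap.ext
    intro w
    simp only [Kmap, Prod.snd_neg, map_add, map_sub, LinearMap.add_apply,
      LinearMap.sub_apply, LinearMap.neg_apply, LinearMap.dualMap_apply]
    have e1 : σ (R α) w = α (R (σ w)) := by
      rw [h.skewσ (R α) w, h.skewR (σ w) α]; ring
    have e2 : α (J (J w)) = -α w - α (R (σ w)) := by
      rw [hJJ w]; simp
    linarith [e1, e2, hc0c u w]

/-- the image of a generalized complex structure under a B-transformation
by a 2-cocycle is a generalized complex structure. -/
theorem gcs_B_transformation (J : g →ₗ[ℝ] g) (R : Module.Dual ℝ g →ₗ[ℝ] g)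
    (σ : g →ₗ[ℝ] Module.Dual ℝ g) (h : IsGCS J R σ)
    (B : g →ₗ[ℝ] Module.Dual ℝ g)
    (hBskew : ∀ u v : g, B u v = -B v u)
    (hBcocycle : ∀ u v w : g, B ⁅u, v⁆ w + B ⁅v, w⁆ u + B ⁅w, u⁆ v = 0) :
    IsGCS (J - R ∘ₗ B) R (B ∘ₗ J + σ - B ∘ₗ R ∘ₗ B + J.dualMap ∘ₗ B) := by
  have hK' : ∀ x : g × Module.Dual ℝ g,
      Kmap (J - R ∘ₗ B) R (B ∘ₗ J + σ - B ∘ₗ R ∘ₗ B + J.dualMap ∘ₗ B) x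
        = eB B (Kmap J R σ (eB (-B) x)) := by
    intro x
    obtain ⟨u, α⟩ := x
    rw [Prod.ext_iff]
    constructor
    · simp only [Kmap, eB, map_add, map_sub, map_neg, LinearMap.sub_apply,
        LinearMap.comp_apply, LinearMap.add_apply, LinearMap.neg_apply]
      abel
    · apply LinearMap.ext
      intro w
      simp only [Kmap, eB, map_add, map_sub, map_neg, LinearMap.sub_apply,
        LinearMap.comp_apply, LinearMap.add_apply, LinearMap.neg_apply,
        LinearMap.dualMap_apply]
      linarith [h.skewR α (B w), hBskew (R α) w]
  refine isGCS_mk _ _ _ h.skewR ?_ ?_ ?_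
  · -- skew-symmetry of the new sigma
    intro u v
    simp only [LinearMap.add_apply, LinearMap.sub_apply, LinearMap.comp_apply,
      LinearMap.dualMap_apply]
    linarith [hBskew (J u) v, hBskew (J v) u, h.skewσ u v, hBskew (R (B u)) v,
      hBskew (R (B v)) u, h.skewR (B v) (B u)]
  · -- square is minus identity
    intro x
    rw [hK', hK', eB_cancel', K2_of_GCS h]
    obtain ⟨u, α⟩ := x
    simp [eB, Prod.ext_iff]
  · -- Nijenhuis-type integrability
    intro x y
    rw [show Kmap (J - R ∘ₗ B) R (B ∘ₗ J + σ - B ∘ₗ R ∘ₗ B + J.dualMap ∘ₗ B)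
          = fun z => eB B (Kmap J R σ (eB (-B) z)) from funext hK',
        NK_conj B hBskew hBcocycle, NK_eq_zero h]
    simp [eB]
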